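/- With the weighted-graph and unit potential flow setup below, fix η > 0 and form the modified graph Ĝ by adding a new vertex σ and the edge (σ, s) (in both orientations) with weight η d_s. Extend the voltages by v̂_σ := R_s + 1/(η d_s) =: R̂_σ and v̂_x := v_x for x ∈ V, and extend the flow by f̂_{σs} := 1 = −f̂_{sσ} and f̂ := f on E; let |f̂⟩ = (1/√(2R̂_σ)) Σ_{(x,y) ∈ Ê, ŵ_{xy} > 0} (f̂_{xy}/√(ŵ_{xy})) |xy⟩ be the electric flow state of Ĝ in the edge space ℓ(Ê), and view |f⟩ ∈ ℓ(E) ⊆ ℓ(Ê). Then ⟨f̂|f⟩ = √(R_s/R̂_σ); in particular |⟨f̂|f⟩|² = R_s/R̂_σ = 1/(1 + 1/(η R_s d_s)). -/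

import Mathlib

/-!
On the edges of `G` the extended flow and weights agree with the original ones, so the overlap is
`(2R̂_σ)^{-1/2} (2R_s)^{-1/2} Σ_{xy} f_{xy}²/w_{xy}`. The sum is the energy of the potential flow,
`Σ_{xy} w_{xy}(v_x − v_y)² = 2 Σ_x v_x (net flow out of x) = 2 v_s`, since the net flow vanishes off
`{s} ∪ M`, the voltage vanishes on `M`, and the net flow out of `s` is one. Hence the overlap is
`2R_s / √(2R̂_σ · 2R_s) = √(R_s / R̂_σ)`.
-/

open scoped InnerProductSpace BigOperators

namespace Elfs

variable {V : Type*} [Fintype V] [DecidableEq V]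

/-- The degree of a vertex: `d_x = Σ_y w_{xy}`. -/
noncomputable def deg (w : V → V → ℝ) (x : V) : ℝ := ∑ y, w x y

/-- The basis state `|xy⟩` of the edge space. -/
noncomputable def ket (p : V × V) : EuclideanSpace ℂ (V × V) :=
  EuclideanSpace.single p 1

/-- The star state `|φ_x⟩ = (1/√d_x) Σ_y √(w_{xy}) |xy⟩`. -/
noncomputable def starState (w : V → V → ℝ) (x : V) : EuclideanSpace ℂ (V × V) :=
  ((Real.sqrt (deg w x) : ℂ))⁻¹ • ∑ y, ((Real.sqrt (w x y) : ℝ) : ℂ) • ket (x, y)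

/-- The electric flow state `|f⟩ = (1/√(2 R_s)) Σ_{(x,y)} (f_{xy}/√(w_{xy})) |xy⟩`
for the potential flow `f_{xy} = w_{xy}(v_x − v_y)` (terms with `w_{xy} = 0` contribute `0`,
matching the restriction of the sum to edges of positive weight). -/
noncomputable def flowState (w : V → V → ℝ) (v : V → ℝ) (s : V) :
    EuclideanSpace ℂ (V × V) :=
  ((Real.sqrt (2 * v s) : ℂ))⁻¹ •
    ∑ p : V × V, ((w p.1 p.2 * (v p.1 - v p.2) / Real.sqrt (w p.1 p.2) : ℝ) : ℂ) • ket p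

/-- The symmetric subspace `span{|xy⟩ + |yx⟩ : (x,y) ∈ E}`. -/
noncomputable def symSpan (E : Set (V × V)) : Submodule ℂ (EuclideanSpace ℂ (V × V)) :=
  Submodule.span ℂ {u | ∃ p ∈ E, u = ket p + ket p.swap}

/-- `Π₊`, the orthogonal projection onto the symmetric subspace. -/
noncomputable def projSym (E : Set (V × V)) :
    EuclideanSpace ℂ (V × V) →ₗ[ℂ] EuclideanSpace ℂ (V × V) :=
  (symSpan E).subtype ∘ₗ (Submodule.orthogonalProjectionOnto (symSpan E)).toLinearMap

end Elfs

namespace Elfs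

variable {V : Type*} [Fintype V] [DecidableEq V]

/-- Weights of the modified graph `Ĝ`, with a new vertex `σ = none` attached to the
source `s` by an edge of weight `η d_s`. -/
noncomputable def what (w : V → V → ℝ) (s : V) (η : ℝ) : Option V → Option V → ℝ
  | some x, some y => w x y
  | none, some y => if y = s then η * deg w s else 0
  | some x, none => if x = s then η * deg w s else 0
  | none, none => 0

/-- The flow on `Ĝ`: it is `f` on `E` and pushes a unit flow along the new edge `(σ, s)`. -/
noncomputable def fhatFlow (w : V → V → ℝ) (v : V → ℝ) (s : V) :
    Option V → Option V → ℝ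
  | some x, some y => w x y * (v x - v y)
  | none, some y => if y = s then 1 else 0
  | some x, none => if x = s then -1 else 0
  | none, none => 0

end Elfs

open Elfs

namespace Elfs

section Energy

variable {V : Type*} [Fintype V] (w : V → V → ℝ) (v : V → ℝ)

theorem sum_mul_sq_sub_eq_two_mul_sum_netFlow (hwsymm : ∀ x y, w x y = w y x) :
    ∑ x, ∑ y, w x y * (v x - v y) ^ 2 = 2 * ∑ x, v x * ∑ y, w x y * (v x - v y) := by
  have hswap : ∑ x, ∑ y, v y * (w x y * (v x - v y))
      = -∑ x, v x * ∑ y, w x y * (v x - v y) := by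
    rw [Finset.sum_comm, ← Finset.sum_neg_distrib]
    refine Finset.sum_congr rfl fun y _ => ?_
    rw [Finset.mul_sum, ← Finset.sum_neg_distrib]
    refine Finset.sum_congr rfl fun x _ => ?_
    rw [hwsymm x y]
    ring
  calc ∑ x, ∑ y, w x y * (v x - v y) ^ 2
      = ∑ x, ∑ y, (v x * (w x y * (v x - v y)) - v y * (w x y * (v x - v y))) := by
        exact Finset.sum_congr rfl fun x _ => Finset.sum_congr rfl fun y _ => by ring
    _ = 2 * ∑ x, v x * ∑ y, w x y * (v x - v y) := by
        simp only [Finset.sum_sub_distrib, ← Finset.mul_sum, hswap]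
        ring

theorem sum_mul_netFlow_eq_source (s : V) (M : Finset V) (hvM : ∀ y ∈ M, v y = 0)
    (hunit : ∑ y, w s y * (v s - v y) = 1)
    (hcons : ∀ x, x ≠ s → x ∉ M → ∑ y, w x y * (v x - v y) = 0) :
    ∑ x, v x * ∑ y, w x y * (v x - v y) = v s := by
  rw [Fintype.sum_eq_single s, hunit, mul_one]
  intro x hx
  by_cases hxM : x ∈ M
  · rw [hvM x hxM, zero_mul]
  · rw [hcons x hx hxM, mul_zero]

theorem mul_div_sqrt_sq {a : ℝ} (ha : 0 ≤ a) (b : ℝ) : (a * b / √a) ^ 2 = a * b ^ 2 := by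
  rcases ha.eq_or_lt with rfl | ha
  · simp
  · rw [div_pow, Real.sq_sqrt ha.le]
    field_simp

theorem sum_sq_flowState_coeff_eq (hw0 : ∀ x y, 0 ≤ w x y)
    (hwsymm : ∀ x y, w x y = w y x) (s : V) (M : Finset V) (hvM : ∀ y ∈ M, v y = 0)
    (hunit : ∑ y, w s y * (v s - v y) = 1)
    (hcons : ∀ x, x ≠ s → x ∉ M → ∑ y, w x y * (v x - v y) = 0) :
    ∑ p : V × V, (w p.1 p.2 * (v p.1 - v p.2) / √(w p.1 p.2)) ^ 2 = 2 * v s := by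
  simp only [Fintype.sum_prod_type, mul_div_sqrt_sq (hw0 _ _)]
  rw [sum_mul_sq_sub_eq_two_mul_sum_netFlow w v hwsymm,
    sum_mul_netFlow_eq_source w v s M hvM hunit hcons]

end Energy

theorem sum_smul_single_apply {ι : Type*} [Fintype ι] [DecidableEq ι] (c : ι → ℂ) (i : ι) :
    (∑ p, c p • EuclideanSpace.single p (1 : ℂ) : EuclideanSpace ℂ ι) i = c i := by
  simp [Pi.single_apply]

theorem inner_smul_sum_single_ofReal {ι κ : Type*} [Fintype ι] [DecidableEq ι] [Fintype κ]
    (r r' : ℝ) (a : ι → ℝ) (b : κ → ℝ) (e : κ → ι) :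
    ⟪(r : ℂ) • ∑ p, (a p : ℂ) • EuclideanSpace.single p (1 : ℂ),
      (r' : ℂ) • ∑ q, (b q : ℂ) • EuclideanSpace.single (e q) (1 : ℂ)⟫_ℂ
      = ((r * r' * ∑ q, a (e q) * b q : ℝ) : ℂ) := by
  simp only [inner_smul_right, inner_sum, EuclideanSpace.inner_single_right, PiLp.smul_apply,
    sum_smul_single_apply, smul_eq_mul, one_mul, map_mul, Complex.conj_ofReal]
  push_cast
  rw [Finset.mul_sum, Finset.mul_sum]
  exact Finset.sum_congr rfl fun q _ => by ring

theorem inv_sqrt_mul_inv_sqrt_mul_self {R : ℝ} (hR : 0 ≤ R) (R' : ℝ) :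
    (√(2 * R'))⁻¹ * (√(2 * R))⁻¹ * (2 * R) = √(R / R') := by
  calc (√(2 * R'))⁻¹ * (√(2 * R))⁻¹ * (2 * R) = 2 * R / √(2 * R) / √(2 * R') := by ring
    _ = √(2 * R) / √(2 * R') := by rw [Real.div_sqrt]
    _ = √(R / R') := by
        rw [← Real.sqrt_div (by positivity), mul_div_mul_left _ _ two_ne_zero]

theorem div_add_one_div_mul_eq_inv {R η d : ℝ} (hR : 0 < R) (hη : 0 < η) (hd : 0 < d) :
    R / (R + 1 / (η * d)) = (1 + 1 / (η * (R * d)))⁻¹ := by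
  field_simp

end Elfs

theorem stmt11 {V : Type*} [Fintype V] [DecidableEq V]
    (w : V → V → ℝ) (s : V) (M : Finset V)
    (hw0 : ∀ x y, 0 ≤ w x y) (hwsymm : ∀ x y, w x y = w y x)
    (hdeg : ∀ x, 0 < deg w x)
    (v : V → ℝ) (hvM : ∀ y ∈ M, v y = 0) (hRpos : 0 < v s)
    (hunit : ∑ y, w s y * (v s - v y) = 1)
    (hcons : ∀ x, x ≠ s → x ∉ M → ∑ y, w x y * (v x - v y) = 0)
    (η : ℝ) (hη : 0 < η)
    (Rhat : ℝ) (hRhat : Rhat = v s + 1 / (η * deg w s))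
    (fhat : EuclideanSpace ℂ (Option V × Option V))
    (hfhat : fhat = ((Real.sqrt (2 * Rhat) : ℂ))⁻¹ •
        ∑ p : Option V × Option V,
          ((fhatFlow w v s p.1 p.2 / Real.sqrt (what w s η p.1 p.2) : ℝ) : ℂ) •
            EuclideanSpace.single p (1 : ℂ))
    (femb : EuclideanSpace ℂ (Option V × Option V))
    (hfemb : femb = ((Real.sqrt (2 * v s) : ℂ))⁻¹ •
        ∑ p : V × V,
          ((w p.1 p.2 * (v p.1 - v p.2) / Real.sqrt (w p.1 p.2) : ℝ) : ℂ) •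
            EuclideanSpace.single (some p.1, some p.2) (1 : ℂ)) :
    ⟪fhat, femb⟫_ℂ = ((Real.sqrt (v s / Rhat) : ℝ) : ℂ) ∧
    ‖⟪fhat, femb⟫_ℂ‖ ^ 2 = v s / Rhat ∧
    v s / Rhat = (1 + 1 / (η * (v s * deg w s)))⁻¹ := by
  have hRhat_pos : 0 < Rhat := by
    have := hdeg s
    rw [hRhat]
    positivity
  -- On the edges of `G`, the flow and the weights of `Ĝ` are those of `G`.
  have hoverlap : ⟪fhat, femb⟫_ℂ = ((√(v s / Rhat) : ℝ) : ℂ) := by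
    rw [hfhat, hfemb, ← Complex.ofReal_inv, ← Complex.ofReal_inv, inner_smul_sum_single_ofReal]
    change ((_ * _ * ∑ p : V × V, (w p.1 p.2 * (v p.1 - v p.2) / √(w p.1 p.2)) *
      (w p.1 p.2 * (v p.1 - v p.2) / √(w p.1 p.2)) : ℝ) : ℂ) = _
    simp only [← sq, sum_sq_flowState_coeff_eq w v hw0 hwsymm s M hvM hunit hcons,
      inv_sqrt_mul_inv_sqrt_mul_self hRpos.le]
  refine ⟨hoverlap, ?_, ?_⟩
  · rw [hoverlap, Complex.norm_real, Real.norm_eq_abs, sq_abs, Real.sq_sqrt]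
    positivity
  · rw [hRhat]
    exact div_add_one_div_mul_eq_inv hRpos hη (hdeg s)
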